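/- Let $\alpha_1, \dots, \alpha_n$ be exchangeable random variables (their joint distribution is invariant under permutations) and let $\tau$ be uniform on $[0,1]$ independent of them. Then the smoothed rank $p := (|\{i : \alpha_i < \alpha_n\}| + \tau |\{i : \alpha_i = \alpha_n\}|)/n$ is uniformly distributed on $[0,1]$. -/

import Mathlib

open MeasureTheory ProbabilityTheory Finset
open scoped ENNReal

/-! The smoothed rank of a value `v` among fixed scores `a`,
`t ↦ (#{a i < v} + t * #{a i = v}) / n`, maps `U[0,1]` to the uniform law on
`[#{a i < v} / n, #{a i ≤ v} / n]`. Over the distinct values of `a` these intervals tile `[0,1]`,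
and each value `v` is taken by `#{a i = v}` indices, so the average over `j` of the laws of the
smoothed ranks of `a j` is exactly `U[0,1]`. Exchangeability makes the law of the smoothed rank
of `α j` independent of `j`, so each of them is this average. -/

theorem map_restrict_Icc_affine {c d : ℝ} (hd : 0 < d) :
    (volume.restrict (Set.Icc 0 1)).map (fun t => c + t * d)
      = ENNReal.ofReal d⁻¹ • volume.restrict (Set.Ico c (c + d)) := by
  have hf : Measurable fun t : ℝ => c + t * d := by fun_prop
  ext s hs
  have hpre : (fun t => c + t * d) ⁻¹' s ∩ Set.Icc 0 1
      = (· * d) ⁻¹' ((c + ·) ⁻¹' (s ∩ Set.Icc c (c + d))) := by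
    ext t
    simp only [Set.mem_inter_iff, Set.mem_preimage, Set.mem_Icc]
    constructor <;> rintro ⟨hs, h0, h1⟩ <;> exact ⟨hs, by nlinarith, by nlinarith⟩
  rw [Measure.map_apply hf hs, Measure.restrict_apply (hf hs), hpre,
    Real.volume_preimage_mul_right hd.ne', measure_preimage_add, abs_of_pos (inv_pos.2 hd),
    Measure.smul_apply, smul_eq_mul, Measure.restrict_congr_set Ico_ae_eq_Icc,
    Measure.restrict_apply hs]

namespace ConformalPrediction

variable {ι : Type*} [Fintype ι]

noncomputable def smoothedRank (a : ι → ℝ) (v t : ℝ) : ℝ :=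
  ((#{i | a i < v} : ℝ) + t * #{i | a i = v}) / Fintype.card ι

section Deterministic

variable (a : ι → ℝ)

theorem card_lt_add_card_eq (v : ℝ) : #{i | a i < v} + #{i | a i = v} = #{i | a i ≤ v} := by
  classical
  rw [← card_union_of_disjoint (disjoint_filter.2 fun _ _ h => h.ne), ← filter_or]
  simp only [le_iff_lt_or_eq]

theorem card_le_le_card_lt {v w : ℝ} (h : v < w) : #{i | a i ≤ v} ≤ #{i | a i < w} :=
  card_le_card fun i => by
    simp only [mem_filter, mem_univ, true_and]
    exact fun hi => hi.trans_lt h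

theorem smoothedRank_eq (v t : ℝ) :
    smoothedRank a v t = smoothedRank a v 0 + t * (#{i | a i = v} / Fintype.card ι) := by
  simp only [smoothedRank]; ring

theorem smoothedRank_one (v : ℝ) : smoothedRank a v 1 = #{i | a i ≤ v} / Fintype.card ι := by
  rw [smoothedRank, one_mul, ← card_lt_add_card_eq, Nat.cast_add]

theorem smoothedRank_one_le_zero {v w : ℝ} (h : v < w) :
    smoothedRank a v 1 ≤ smoothedRank a w 0 := by
  rw [smoothedRank_one, smoothedRank, zero_mul, add_zero]
  exact div_le_div_of_nonneg_right (mod_cast card_le_le_card_lt a h) (Nat.cast_nonneg _)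

theorem pairwise_disjoint_Ico_smoothedRank :
    Pairwise (Function.onFun Disjoint fun v : ℝ =>
      Set.Ico (smoothedRank a v 0) (smoothedRank a v 1)) := by
  have key : ∀ {v w}, v < w →
      Disjoint (Set.Ico (smoothedRank a v 0) (smoothedRank a v 1))
        (Set.Ico (smoothedRank a w 0) (smoothedRank a w 1)) := fun h =>
    (Set.Iio_disjoint_Ici (smoothedRank_one_le_zero a h)).mono Set.Ico_subset_Iio_self
      Set.Ico_subset_Ici_self
  intro v w hvw
  rcases hvw.lt_or_gt with h | h
  exacts [key h, (key h).symm]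

theorem measurable_smoothedRank (v : ℝ) : Measurable (smoothedRank a v) := by
  unfold smoothedRank; fun_prop

theorem map_restrict_Icc_smoothedRank {v : ℝ} (hv : v ∈ Set.range a) :
    (volume.restrict (Set.Icc 0 1)).map (smoothedRank a v)
      = ENNReal.ofReal (Fintype.card ι / #{i | a i = v}) •
          volume.restrict (Set.Ico (smoothedRank a v 0) (smoothedRank a v 1)) := by
  obtain ⟨j, rfl⟩ := hv
  have hE : (0 : ℝ) < #{i | a i = a j} := by
    exact_mod_cast card_pos.2 ⟨j, by simp⟩
  have hn : (0 : ℝ) < Fintype.card ι := by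
    exact_mod_cast Fintype.card_pos_iff.2 ⟨j⟩
  have hd : (0 : ℝ) < #{i | a i = a j} / Fintype.card ι := by positivity
  have hend : smoothedRank a (a j) 0 + #{i | a i = a j} / Fintype.card ι
      = smoothedRank a (a j) 1 := by
    rw [smoothedRank_eq a _ 1, one_mul]
  conv_lhs => rw [funext (smoothedRank_eq a (a j))]
  rw [map_restrict_Icc_affine hd, hend, inv_div]

theorem smoothedRank_one_sub_zero (v : ℝ) :
    smoothedRank a v 1 - smoothedRank a v 0 = #{i | a i = v} / Fintype.card ι := by
  rw [smoothedRank_eq a _ 1, one_mul, add_sub_cancel_left]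

theorem sum_smoothedRank_one_sub_zero [Nonempty ι] :
    ∑ v ∈ univ.image a, (smoothedRank a v 1 - smoothedRank a v 0) = 1 := by
  have hn : (Fintype.card ι : ℝ) ≠ 0 := by exact_mod_cast Fintype.card_ne_zero
  simp_rw [smoothedRank_one_sub_zero, ← sum_div, ← Nat.cast_sum, ← card_eq_sum_card_image,
    card_univ, div_self hn]

theorem biUnion_Ico_smoothedRank_ae_eq [Nonempty ι] :
    (⋃ v ∈ univ.image a, Set.Ico (smoothedRank a v 0) (smoothedRank a v 1)) =ᵐ[volume]
      Set.Ico (0 : ℝ) 1 := by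
  have hn : (0 : ℝ) < Fintype.card ι := by exact_mod_cast Fintype.card_pos
  refine ae_eq_of_subset_of_measure_ge ?_ ?_
    (Finset.measurableSet_biUnion _ fun _ _ => measurableSet_Ico).nullMeasurableSet (by simp)
  · refine Set.iUnion₂_subset fun v _ => Set.Ico_subset_Ico ?_ ?_
    · rw [smoothedRank, zero_mul, add_zero]
      positivity
    · rw [smoothedRank_one, div_le_one hn]
      exact_mod_cast card_le_univ _
  · rw [measure_biUnion_finset ((pairwise_disjoint_Ico_smoothedRank a).set_pairwise _)
      fun _ _ => measurableSet_Ico]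
    simp only [Real.volume_Ico, sub_zero, ENNReal.ofReal_one]
    rw [← ENNReal.ofReal_sum_of_nonneg, sum_smoothedRank_one_sub_zero, ENNReal.ofReal_one]
    intro v _
    rw [smoothedRank_one_sub_zero]
    positivity

theorem sum_map_restrict_Icc_smoothedRank [Nonempty ι] :
    ∑ j, (volume.restrict (Set.Icc 0 1)).map (smoothedRank a (a j))
      = (Fintype.card ι : ℝ≥0∞) • volume.restrict (Set.Icc (0 : ℝ) 1) := by
  calc ∑ j, (volume.restrict (Set.Icc 0 1)).map (smoothedRank a (a j))
      = ∑ v ∈ univ.image a,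
          #{j | a j = v} • (volume.restrict (Set.Icc 0 1)).map (smoothedRank a v) :=
        sum_comp (fun v => (volume.restrict (Set.Icc 0 1)).map (smoothedRank a v)) a
    _ = ∑ v ∈ univ.image a, (Fintype.card ι : ℝ≥0∞) •
          volume.restrict (Set.Ico (smoothedRank a v 0) (smoothedRank a v 1)) := by
        refine sum_congr rfl fun v hv => ?_
        have hE : 0 < #{j | a j = v} := by
          obtain ⟨j, -, rfl⟩ := mem_image.1 hv
          exact card_pos.2 ⟨j, by simp⟩
        rw [map_restrict_Icc_smoothedRank a (by simpa using hv),
          ← Nat.cast_smul_eq_nsmul ℝ≥0∞, smul_smul,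
          ENNReal.ofReal_div_of_pos (by exact_mod_cast hE), ENNReal.ofReal_natCast,
          ENNReal.ofReal_natCast, ENNReal.mul_div_cancel (by exact_mod_cast hE.ne') (by simp)]
    _ = (Fintype.card ι : ℝ≥0∞) • volume.restrict
          (⋃ v ∈ univ.image a, Set.Ico (smoothedRank a v 0) (smoothedRank a v 1)) := by
        rw [← smul_sum, Measure.restrict_biUnion_finset
          ((pairwise_disjoint_Ico_smoothedRank a).set_pairwise _) fun _ => measurableSet_Ico,
          Measure.sum_fintype]
        exact congrArg _ (sum_coe_sort _ _).symm
    _ = (Fintype.card ι : ℝ≥0∞) • volume.restrict (Set.Icc (0 : ℝ) 1) := by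
        rw [Measure.restrict_congr_set (biUnion_Ico_smoothedRank_ae_eq a),
          Measure.restrict_congr_set Ico_ae_eq_Icc]

end Deterministic

theorem smoothedRank_comp_perm (a : ι → ℝ) (σ : Equiv.Perm ι) (v t : ℝ) :
    smoothedRank (a ∘ σ) v t = smoothedRank a v t := by
  simp only [smoothedRank, card_filter, Function.comp_apply,
    Equiv.sum_comp σ fun i => if a i < v then 1 else 0,
    Equiv.sum_comp σ fun i => if a i = v then 1 else 0]

theorem measurable_card_filter {X : Type*} [MeasurableSpace X] (p : ι → X → Prop)
    [∀ i x, Decidable (p i x)] (hp : ∀ i, MeasurableSet {x | p i x}) :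
    Measurable fun x => (#{i | p i x} : ℝ) := by
  simp_rw [card_filter, Nat.cast_sum]
  exact Finset.measurable_sum _ fun i _ => by
    simpa using Measurable.ite (hp i) measurable_const measurable_const

theorem measurable_smoothedRank_self (j : ι) :
    Measurable fun p : (ι → ℝ) × ℝ => smoothedRank p.1 (p.1 j) p.2 := by
  have hlt := measurable_card_filter (fun i (p : (ι → ℝ) × ℝ) => p.1 i < p.1 j) fun i =>
    measurableSet_lt (by fun_prop) (by fun_prop)
  have heq := measurable_card_filter (fun i (p : (ι → ℝ) × ℝ) => p.1 i = p.1 j) fun i =>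
    measurableSet_eq_fun (by fun_prop) (by fun_prop)
  unfold smoothedRank
  exact (hlt.add (measurable_snd.mul heq)).div_const _

variable {μ : Measure (ι → ℝ)}

theorem map_prod_smoothedRank_self_eq [SFinite μ] (ν : Measure ℝ) [SFinite ν]
    (hμ : ∀ σ : Equiv.Perm ι, μ.map (· ∘ σ) = μ) (j k : ι) :
    (μ.prod ν).map (fun p => smoothedRank p.1 (p.1 j) p.2)
      = (μ.prod ν).map (fun p => smoothedRank p.1 (p.1 k) p.2) := by
  classical
  set σ : Equiv.Perm ι := Equiv.swap j k
  have hσ : Measurable fun a : ι → ℝ => a ∘ σ := by fun_prop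
  calc (μ.prod ν).map (fun p => smoothedRank p.1 (p.1 j) p.2)
      = ((μ.map (· ∘ σ)).prod (ν.map id)).map (fun p => smoothedRank p.1 (p.1 j) p.2) := by
        rw [hμ, Measure.map_id]
    _ = (μ.prod ν).map ((fun p => smoothedRank p.1 (p.1 j) p.2) ∘ Prod.map (· ∘ σ) id) := by
        rw [Measure.map_prod_map _ _ hσ measurable_id,
          Measure.map_map (measurable_smoothedRank_self j) (hσ.prodMap measurable_id)]
    _ = (μ.prod ν).map (fun p => smoothedRank p.1 (p.1 k) p.2) := by
        congr 1
        funext p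
        simp [σ, smoothedRank_comp_perm]

theorem map_prod_restrict_Icc_smoothedRank_self [IsProbabilityMeasure μ]
    (hμ : ∀ σ : Equiv.Perm ι, μ.map (· ∘ σ) = μ) (j : ι) :
    (μ.prod (volume.restrict (Set.Icc 0 1))).map (fun p => smoothedRank p.1 (p.1 j) p.2)
      = volume.restrict (Set.Icc 0 1) := by
  have : Nonempty ι := ⟨j⟩
  set ν : Measure ℝ := volume.restrict (Set.Icc 0 1)
  set H : ι → (ι → ℝ) × ℝ → ℝ := fun k p => smoothedRank p.1 (p.1 k) p.2
  have hH : ∀ k, Measurable (H k) := measurable_smoothedRank_self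
  ext s hs
  have hsection : ∀ a k, ν (Prod.mk a ⁻¹' (H k ⁻¹' s)) = ν.map (smoothedRank a (a k)) s :=
    fun a k => (Measure.map_apply (measurable_smoothedRank a _) hs).symm
  refine (ENNReal.mul_right_inj (by simp) (ENNReal.natCast_ne_top (Fintype.card ι))).1 ?_
  calc (Fintype.card ι : ℝ≥0∞) * (μ.prod ν).map (H j) s
      = ∑ k, (μ.prod ν).map (H k) s := by
        simp [H, map_prod_smoothedRank_self_eq ν hμ _ j]
    _ = ∑ k, ∫⁻ a, ν (Prod.mk a ⁻¹' (H k ⁻¹' s)) ∂μ := by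
        simp_rw [Measure.map_apply (hH _) hs, Measure.prod_apply (hH _ hs)]
    _ = ∫⁻ a, (∑ k, ν.map (smoothedRank a (a k))) s ∂μ := by
        rw [← lintegral_finsetSum _ fun k _ => measurable_measure_prodMk_left (hH k hs)]
        simp_rw [Measure.finsetSum_apply, hsection]
    _ = (Fintype.card ι : ℝ≥0∞) * ν s := by
        simp [ν, sum_map_restrict_Icc_smoothedRank]

end ConformalPrediction

open ConformalPrediction in
/-- Validity of a smoothed conformal p-value: if the conformity scores `α_1, …, α_n` are
exchangeable and `τ` is uniform on `[0,1]` and independent of them, then the smoothed rank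
`p := (|{i : α_i < α_n}| + τ |{i : α_i = α_n}|)/n` is uniform on `[0,1]`. -/
theorem smoothed_conformal_pvalue_uniform {Ω : Type*} [MeasurableSpace Ω]
    (P : Measure Ω) [IsProbabilityMeasure P]
    (n : ℕ) (hn : 0 < n) (α : Ω → Fin n → ℝ) (hα : Measurable α)
    (τ : Ω → ℝ) (hτm : Measurable τ)
    (hτ : P.map τ = volume.restrict (Set.Icc (0 : ℝ) 1))
    (hindep : IndepFun α τ P)
    (hexch : ∀ σ : Equiv.Perm (Fin n), P.map (fun ω => α ω ∘ σ) = P.map α) :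
    P.map (fun ω =>
        (((Finset.univ.filter fun i => α ω i < α ω ⟨n - 1, by omega⟩).card : ℝ)
          + τ ω * ((Finset.univ.filter fun i => α ω i = α ω ⟨n - 1, by omega⟩).card : ℝ)) / n)
      = volume.restrict (Set.Icc (0 : ℝ) 1) := by
  have : IsProbabilityMeasure (P.map α) := Measure.isProbabilityMeasure_map hα.aemeasurable
  have hlaw :
      P.map (fun ω => (α ω, τ ω)) = (P.map α).prod (volume.restrict (Set.Icc 0 1)) := by
    rw [← hτ]
    exact (indepFun_iff_map_prod_eq_prod_map_map hα.aemeasurable hτm.aemeasurable).1 hindep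
  have hperm : ∀ σ : Equiv.Perm (Fin n), (P.map α).map (· ∘ σ) = P.map α := fun σ => by
    rw [Measure.map_map (by fun_prop) hα]
    exact hexch σ
  rw [← map_prod_restrict_Icc_smoothedRank_self hperm ⟨n - 1, by omega⟩, ← hlaw,
    Measure.map_map (measurable_smoothedRank_self _) (hα.prodMk hτm)]
  congr 1
  funext ω
  simp [smoothedRank]
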